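/- Let g(A) = ‖A‖_(k) be the Ky Fan k-norm on M_n(ℂ). Then for all X ∈ M_n(ℂ), the right directional derivative g'_+(A, X) = lim_{t→0+} (‖A + tX‖_(k) − ‖A‖_(k))/t equals the maximum of ∑_{i=1}^k Re⟨u_i, Xv_i⟩ over all orthonormal systems u_1,...,u_k and v_1,...,v_k in ℂ^n satisfying Av_i = s_i(A)u_i for all 1 ≤ i ≤ k. -/

import Mathlib

open Matrix BigOperators
open scoped ComplexOrder

noncomputable def svalues {m p : ℕ} (A : Matrix (Fin m) (Fin p) ℂ) : Fin p → ℝ :=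
  fun i => Real.sqrt
    (((Matrix.isHermitian_conjTranspose_mul_self A).eigenvalues ∘
      Tuple.sort (Matrix.isHermitian_conjTranspose_mul_self A).eigenvalues) i.rev)

noncomputable def kyFan {n : ℕ} (k : ℕ) (A : Matrix (Fin n) (Fin n) ℂ) : ℝ :=
  ∑ i ∈ Finset.univ.filter (fun i : Fin n => (i : ℕ) < k), svalues A i

def ONSys {n k : ℕ} (u : Fin k → Fin n → ℂ) : Prop :=
  ∀ i j, star (u i) ⬝ᵥ u j = if i = j then 1 else 0

noncomputable def eigDesc {n : ℕ} (A : Matrix (Fin n) (Fin n) ℂ) (hA : A.IsHermitian) :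
    Fin n → ℝ :=
  (hA.eigenvalues ∘ Tuple.sort hA.eigenvalues) ∘ Fin.rev

/-!
Ky Fan's maximum principle: for orthonormal systems `u`, `v` of length `k`,
`∑ Re ⟨u i, B v i⟩ ≤ ‖B‖_(k)`, with equality when `(u, v)` is a singular system of `B`. So the
Ky Fan norm is a maximum of real-linear functionals; in particular it is convex, and the slope
`(‖A + tX‖_(k) - ‖A‖_(k)) / t` is monotone in `t > 0` and tends to its infimum `d` as `t → 0⁺`.
A singular system `(u, v)` of `A` bounds every slope from below by `∑ Re ⟨u i, X v i⟩`, hence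
that value is `≤ d`. Conversely, for a singular system `(u_t, v_t)` of `A + tX` the slope at `t`
is at most `∑ Re ⟨u_t i, X v_t i⟩`, and by compactness `(u_t, v_t)` has a limit point as
`t → 0⁺`, which is a singular system of `A` because the singular values of `A + tX` are
differences of the convex, hence continuous, functions `t ↦ ‖A + tX‖_(j)`.
-/

open Finset RCLike Filter Topology

-- Induction on `n`: lowering all weights by the last one `τ` keeps them antitone and
-- nonnegative, and the removed part `τ * ∑ c` is at most `τ * k`.
theorem sum_mul_le_sum_filter_lt {k : ℕ} : ∀ {n : ℕ} {σ c : Fin n → ℝ}, Antitone σ →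
    (∀ j, 0 ≤ σ j) → (∀ j, c j ≤ 1) → (∀ s : Finset (Fin n), ∑ j ∈ s, c j ≤ k) →
    ∑ j, σ j * c j ≤ ∑ j ∈ univ.filter (fun j : Fin n => (j : ℕ) < k), σ j
  | 0, _, _, _, _, _, _ => by simp
  | n + 1, σ, c, hσ, hσ0, hc1, hck => by
    by_cases hnk : n + 1 ≤ k
    · rw [filter_true_of_mem fun j _ => j.isLt.trans_le hnk]
      exact sum_le_sum fun j _ => mul_le_of_le_one_right (hσ0 j) (hc1 j)
    set τ := σ (Fin.last n)
    have ih : ∑ j : Fin n, (σ j.castSucc - τ) * c j.castSucc ≤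
        ∑ j ∈ univ.filter (fun j : Fin n => (j : ℕ) < k), (σ j.castSucc - τ) :=
      sum_mul_le_sum_filter_lt
        (fun i j hij => sub_le_sub_right (hσ (Fin.castSucc_le_castSucc_iff.2 hij)) τ)
        (fun j => sub_nonneg.2 (hσ (Fin.le_last _))) (fun j => hc1 _)
        (fun s => by simpa using hck (s.map Fin.castSuccEmb))
    have hcard : (#{j : Fin n | (j : ℕ) < k} : ℝ) = k := by
      rw [Fin.card_filter_val_lt]; norm_cast; omega
    calc ∑ j, σ j * c j = ∑ j : Fin n, (σ j.castSucc - τ) * c j.castSucc + τ * ∑ j, c j := by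
          simp only [Fin.sum_univ_castSucc, mul_add, mul_sum, sub_mul, sum_sub_distrib]
          ring
      _ ≤ ∑ j ∈ univ.filter (fun j : Fin n => (j : ℕ) < k), (σ j.castSucc - τ) + τ * k :=
          add_le_add ih (mul_le_mul_of_nonneg_left (hck univ) (hσ0 _))
      _ = ∑ j ∈ univ.filter (fun j : Fin (n + 1) => (j : ℕ) < k), σ j := by
          rw [sum_sub_distrib, sum_const, nsmul_eq_mul, hcard, sum_filter, sum_filter,
            Fin.sum_univ_castSucc, if_neg (by simp; omega)]
          simp only [Fin.val_castSucc, add_zero]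
          ring

section InnerProductSpace

variable {𝕜 E F : Type*} [RCLike 𝕜] [NormedAddCommGroup E] [InnerProductSpace 𝕜 E]
  [NormedAddCommGroup F] [InnerProductSpace 𝕜 F]

local notation "⟪" x ", " y "⟫" => inner 𝕜 x y

theorem sum_re_mul_le_one {ι : Type*} (s : Finset ι) {a b : ι → 𝕜}
    (ha : ∑ t ∈ s, ‖a t‖ ^ 2 ≤ 1) (hb : ∑ t ∈ s, ‖b t‖ ^ 2 ≤ 1) :
    ∑ t ∈ s, re (a t * b t) ≤ 1 :=
  calc ∑ t ∈ s, re (a t * b t) ≤ ∑ t ∈ s, (‖a t‖ ^ 2 + ‖b t‖ ^ 2) / 2 :=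
        sum_le_sum fun t _ => (re_le_norm _).trans <| by
          rw [norm_mul]; nlinarith [sq_nonneg (‖a t‖ - ‖b t‖)]
    _ = ((∑ t ∈ s, ‖a t‖ ^ 2) + ∑ t ∈ s, ‖b t‖ ^ 2) / 2 := by rw [← sum_add_distrib, sum_div]
    _ ≤ 1 := by linarith

theorem Orthonormal.sum_norm_inner_sq_le_one {ι : Type*} {v : ι → E} (hv : Orthonormal 𝕜 v)
    (s : Finset ι) {x : E} (hx : ‖x‖ = 1) : ∑ i ∈ s, ‖⟪v i, x⟫‖ ^ 2 ≤ 1 := by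
  simpa [hx] using hv.sum_inner_products_le (s := s) (x := x)

theorem Orthonormal.sum_norm_inner_sq_le_one' {ι : Type*} {v : ι → E} (hv : Orthonormal 𝕜 v)
    (s : Finset ι) {x : E} (hx : ‖x‖ = 1) : ∑ i ∈ s, ‖⟪x, v i⟫‖ ^ 2 ≤ 1 := by
  simpa only [norm_inner_symm] using hv.sum_norm_inner_sq_le_one s hx

theorem sum_re_inner_le_sum_filter_lt {n k : ℕ} {T : E →ₗ[𝕜] F} {σ : Fin n → ℝ} {p : Fin n → F}
    (q : OrthonormalBasis (Fin n) 𝕜 E) (hp : Orthonormal 𝕜 p) (hσ : Antitone σ)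
    (hσ0 : ∀ j, 0 ≤ σ j) (hT : ∀ j, T (q j) = (σ j : 𝕜) • p j) {u : Fin k → F} {v : Fin k → E}
    (hu : Orthonormal 𝕜 u) (hv : Orthonormal 𝕜 v) :
    ∑ i, re ⟪u i, T (v i)⟫ ≤ ∑ j ∈ univ.filter (fun j : Fin n => (j : ℕ) < k), σ j := by
  set c : Fin n → ℝ := fun j => ∑ i, re (⟪u i, p j⟫ * ⟪q j, v i⟫)
  have hexpand : ∀ i, ⟪u i, T (v i)⟫ = ∑ j, (σ j : 𝕜) * (⟪u i, p j⟫ * ⟪q j, v i⟫) := fun i => by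
    conv_lhs => rw [← q.sum_repr' (v i)]
    simp only [map_sum, map_smul, hT, inner_sum, inner_smul_right]
    exact sum_congr rfl fun j _ => by ring
  have hc1 : ∀ j, c j ≤ 1 := fun j =>
    sum_re_mul_le_one _ (hu.sum_norm_inner_sq_le_one _ (hp.1 j))
      (hv.sum_norm_inner_sq_le_one' _ (q.orthonormal.1 j))
  have hck : ∀ s : Finset (Fin n), ∑ j ∈ s, c j ≤ k := fun s => by
    rw [sum_comm]
    simpa using sum_le_sum fun i (_ : i ∈ univ) =>
      sum_re_mul_le_one s (hp.sum_norm_inner_sq_le_one' s (hu.1 i))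
        (q.orthonormal.sum_norm_inner_sq_le_one s (hv.1 i))
  calc ∑ i, re ⟪u i, T (v i)⟫ = ∑ j, σ j * c j := by
        simp only [hexpand, map_sum, re_ofReal_mul, c, mul_sum]
        exact sum_comm
    _ ≤ _ := sum_mul_le_sum_filter_lt hσ hσ0 hc1 hck

theorem exists_orthonormalBasis_eq_norm_smul [FiniteDimensional 𝕜 E] {ι : Type*} [Fintype ι]
    (hcard : Module.finrank 𝕜 E = Fintype.card ι) {w : ι → E}
    (hw : Pairwise fun i j => ⟪w i, w j⟫ = 0) :
    ∃ b : OrthonormalBasis ι 𝕜 E, ∀ i, w i = (‖w i‖ : 𝕜) • b i := by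
  classical
  have hon : Orthonormal 𝕜 ({i | w i ≠ 0}.domRestrict fun i => (‖w i‖⁻¹ : 𝕜) • w i) := by
    rw [orthonormal_iff_ite]
    rintro ⟨i, hi⟩ ⟨j, hj⟩
    simp only [Set.domRestrict_apply, inner_smul_left, inner_smul_right, Subtype.mk.injEq]
    by_cases hij : i = j
    · subst hij
      have : (‖w i‖ : 𝕜) ≠ 0 := by simpa using hi
      rw [if_pos rfl, inner_self_eq_norm_sq_to_K, map_inv₀, conj_ofReal]
      field_simp
    · simp [hw hij, hij]
  obtain ⟨b, hb⟩ := hon.exists_orthonormalBasis_extension_of_card_eq hcard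
  refine ⟨b, fun i => ?_⟩
  by_cases hi : w i = 0
  · simp [hi]
  · rw [hb i hi, smul_smul, mul_inv_cancel₀ (by simpa), one_smul]

theorem inner_toEuclideanLin_toEuclideanLin {m n : Type*} [Fintype m] [Fintype n]
    [DecidableEq n] (B : Matrix m n 𝕜) (x y : EuclideanSpace 𝕜 n) :
    ⟪toEuclideanLin B x, toEuclideanLin B y⟫ = ⟪x, toEuclideanLin (Bᴴ * B) y⟫ := by
  simp only [toLpLin_apply, EuclideanSpace.inner_eq_star_dotProduct, ← mulVec_mulVec,
    star_mulVec]
  rw [dotProduct_comm _ (star _), dotProduct_mulVec, dotProduct_comm]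

end InnerProductSpace

section KyFan

variable {n k : ℕ}

theorem svalues_nonneg {m p : ℕ} (B : Matrix (Fin m) (Fin p) ℂ) (i : Fin p) : 0 ≤ svalues B i :=
  Real.sqrt_nonneg _

theorem svalues_antitone {m p : ℕ} (B : Matrix (Fin m) (Fin p) ℂ) : Antitone (svalues B) :=
  fun _ _ hij => Real.sqrt_le_sqrt (Tuple.monotone_sort _ (Fin.rev_le_rev.2 hij))

-- `q i` is the eigenvector of `Bᴴ * B` for the `i`-th largest eigenvalue `svalues B i ^ 2`;
-- the images `B (q i)` are orthogonal with norms `svalues B i`.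
theorem exists_svd (B : Matrix (Fin n) (Fin n) ℂ) :
    ∃ p q : OrthonormalBasis (Fin n) ℂ (EuclideanSpace ℂ (Fin n)),
      ∀ i, toEuclideanLin B (q i) = (svalues B i : ℂ) • p i := by
  set hH := isHermitian_conjTranspose_mul_self B
  set e : Fin n ≃ Fin n := Fin.revPerm.trans (Tuple.sort hH.eigenvalues)
  set q := hH.eigenvectorBasis.reindex e.symm
  have hμ : ∀ i, svalues B i ^ 2 = hH.eigenvalues (e i) := fun i =>
    Real.sq_sqrt ((posSemidef_conjTranspose_mul_self B).eigenvalues_nonneg _)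
  have hq : ∀ i, toEuclideanLin (Bᴴ * B) (q i) = (svalues B i ^ 2 : ℂ) • q i := fun i => by
    apply WithLp.ofLp_injective
    simp only [q, OrthonormalBasis.reindex_apply, Equiv.symm_symm, toLpLin_apply,
      hH.mulVec_eigenvectorBasis, WithLp.ofLp_smul]
    rw [← Complex.ofReal_pow, hμ, Complex.coe_smul]
  have hinner : ∀ i j, inner ℂ (toEuclideanLin B (q i)) (toEuclideanLin B (q j)) =
      if i = j then (svalues B i ^ 2 : ℂ) else 0 := fun i j => by
    rw [inner_toEuclideanLin_toEuclideanLin, hq, inner_smul_right, q.inner_eq_ite]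
    split_ifs with h <;> simp [h]
  obtain ⟨p, hp⟩ := exists_orthonormalBasis_eq_norm_smul (𝕜 := ℂ) (by simp)
    (w := fun i => toEuclideanLin B (q i)) fun i j hij => (hinner i j).trans (if_neg hij)
  refine ⟨p, q, fun i => ?_⟩
  have hnorm : ‖toEuclideanLin B (q i)‖ = svalues B i := by
    have h := hinner i i
    rw [if_pos rfl, inner_self_eq_norm_sq_to_K, ← map_pow, ← Complex.ofReal_pow] at h
    exact (pow_left_inj₀ (norm_nonneg _) (svalues_nonneg B i) two_ne_zero).1
      (Complex.ofReal_injective h)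
  rw [hp i, hnorm]
  rfl

theorem inner_toLp_toLp_eq_star_dotProduct (x y : Fin n → ℂ) :
    inner ℂ (WithLp.toLp 2 x) (WithLp.toLp 2 y) = star x ⬝ᵥ y := by
  rw [EuclideanSpace.inner_toLp_toLp, dotProduct_comm]

theorem onSys_iff_orthonormal (u : Fin k → Fin n → ℂ) :
    ONSys u ↔ Orthonormal ℂ (fun i => WithLp.toLp 2 (u i)) := by
  simp only [orthonormal_iff_ite, inner_toLp_toLp_eq_star_dotProduct, ONSys]

def IsSingularSystem (hk : k ≤ n) (A : Matrix (Fin n) (Fin n) ℂ) (u v : Fin k → Fin n → ℂ) :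
    Prop :=
  ONSys u ∧ ONSys v ∧ ∀ i, A *ᵥ v i = (svalues A (Fin.castLE hk i) : ℂ) • u i

theorem exists_isSingularSystem (hk : k ≤ n) (A : Matrix (Fin n) (Fin n) ℂ) :
    ∃ u v, IsSingularSystem hk A u v := by
  obtain ⟨p, q, hpq⟩ := exists_svd A
  refine ⟨fun i => p (Fin.castLE hk i), fun i => q (Fin.castLE hk i), ?_, ?_, fun i => ?_⟩
  · rw [onSys_iff_orthonormal]
    exact p.orthonormal.comp _ (Fin.castLE_injective hk)
  · rw [onSys_iff_orthonormal]
    exact q.orthonormal.comp _ (Fin.castLE_injective hk)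
  · exact congrArg WithLp.ofLp (hpq (Fin.castLE hk i))

def rePairing (u v : Fin k → Fin n → ℂ) : Matrix (Fin n) (Fin n) ℂ →ₗ[ℝ] ℝ where
  toFun B := ∑ i, (star (u i) ⬝ᵥ (B *ᵥ v i)).re
  map_add' B C := by simp [add_mulVec, sum_add_distrib]
  map_smul' r B := by simp [smul_mulVec, mul_sum]

theorem rePairing_le_kyFan {u v : Fin k → Fin n → ℂ} (hu : ONSys u) (hv : ONSys v)
    (B : Matrix (Fin n) (Fin n) ℂ) : rePairing u v B ≤ kyFan k B := by
  obtain ⟨p, q, hpq⟩ := exists_svd B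
  simpa [rePairing, kyFan, inner_toLp_toLp_eq_star_dotProduct] using
    sum_re_inner_le_sum_filter_lt q p.orthonormal (svalues_antitone B) (svalues_nonneg B) hpq
      ((onSys_iff_orthonormal u).1 hu) ((onSys_iff_orthonormal v).1 hv)

theorem kyFan_eq_sum_castLE (hk : k ≤ n) (B : Matrix (Fin n) (Fin n) ℂ) :
    kyFan k B = ∑ i : Fin k, svalues B (Fin.castLE hk i) :=
  sum_bij' (fun i h => ⟨i, by simpa using (mem_filter.1 h).2⟩) (fun i _ => Fin.castLE hk i)
    (by simp) (by simp) (by simp) (by simp) (by simp)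

theorem IsSingularSystem.rePairing_eq_kyFan {hk : k ≤ n} {A : Matrix (Fin n) (Fin n) ℂ}
    {u v : Fin k → Fin n → ℂ} (h : IsSingularSystem hk A u v) : rePairing u v A = kyFan k A := by
  simp [rePairing, kyFan_eq_sum_castLE hk, h.2.2, h.1 _ _]

theorem convexOn_kyFan (hk : k ≤ n) :
    ConvexOn ℝ Set.univ (kyFan k : Matrix (Fin n) (Fin n) ℂ → ℝ) := by
  refine ⟨convex_univ, fun B _ C _ a b ha hb _ => ?_⟩
  obtain ⟨u, v, h⟩ := exists_isSingularSystem hk (a • B + b • C)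
  simp only [← h.rePairing_eq_kyFan, map_add, map_smul, smul_eq_mul]
  gcongr <;> exact rePairing_le_kyFan h.1 h.2.1 _

theorem convexOn_kyFan_line (hk : k ≤ n) (A X : Matrix (Fin n) (Fin n) ℂ) :
    ConvexOn ℝ Set.univ fun t : ℝ => kyFan k (A + (t : ℂ) • X) := by
  have h := (convexOn_kyFan hk).comp_affineMap (AffineMap.lineMap A (A + X))
  rw [Set.preimage_univ] at h
  refine h.congr fun t _ => ?_
  simp [AffineMap.lineMap_apply_module', add_comm, Complex.coe_smul]

theorem svalues_eq_kyFan_sub (B : Matrix (Fin n) (Fin n) ℂ) (i : Fin n) :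
    svalues B i = kyFan (i + 1) B - kyFan i B := by
  rw [kyFan_eq_sum_castLE i.isLt, kyFan_eq_sum_castLE i.isLt.le, Fin.sum_univ_castSucc]
  simp only [Fin.castLE_castSucc, add_sub_cancel_left]
  congr

theorem continuous_svalues_line (A X : Matrix (Fin n) (Fin n) ℂ) (i : Fin n) :
    Continuous fun t : ℝ => svalues (A + (t : ℂ) • X) i := by
  have hcont : ∀ j ≤ n, Continuous fun t : ℝ => kyFan j (A + (t : ℂ) • X) := fun j hj =>
    continuousOn_univ.1 ((convexOn_kyFan_line hj A X).continuousOn isOpen_univ)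
  simp only [svalues_eq_kyFan_sub]
  exact (hcont _ i.isLt).sub (hcont _ i.isLt.le)

theorem monotoneOn_kyFan_slope (hk : k ≤ n) (A X : Matrix (Fin n) (Fin n) ℂ) :
    MonotoneOn (fun t : ℝ => (kyFan k (A + (t : ℂ) • X) - kyFan k A) / t) (Set.Ioi 0) := by
  intro s hs t ht hst
  simpa using (convexOn_kyFan_line hk A X).secant_mono trivial trivial trivial
    (ne_of_gt hs) (ne_of_gt ht) hst

theorem IsSingularSystem.rePairing_le_slope {hk : k ≤ n} {A : Matrix (Fin n) (Fin n) ℂ}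
    {u v : Fin k → Fin n → ℂ} (h : IsSingularSystem hk A u v) (X : Matrix (Fin n) (Fin n) ℂ)
    {t : ℝ} (ht : 0 < t) : rePairing u v X ≤ (kyFan k (A + (t : ℂ) • X) - kyFan k A) / t := by
  rw [le_div_iff₀ ht, ← h.rePairing_eq_kyFan, Complex.coe_smul]
  have := rePairing_le_kyFan h.1 h.2.1 (A + t • X)
  rw [map_add, map_smul, smul_eq_mul] at this
  linarith

theorem IsSingularSystem.slope_le_rePairing {hk : k ≤ n} {A X : Matrix (Fin n) (Fin n) ℂ}
    {u v : Fin k → Fin n → ℂ} {t : ℝ} (h : IsSingularSystem hk (A + (t : ℂ) • X) u v)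
    (ht : 0 < t) : (kyFan k (A + (t : ℂ) • X) - kyFan k A) / t ≤ rePairing u v X := by
  rw [div_le_iff₀ ht, ← h.rePairing_eq_kyFan, Complex.coe_smul, map_add, map_smul, smul_eq_mul]
  have := rePairing_le_kyFan h.1 h.2.1 A
  linarith

theorem isCompact_setOf_onSys : IsCompact {u : Fin k → Fin n → ℂ | ONSys u} := by
  refine Metric.isCompact_of_isClosed_isBounded ?_
    ((Metric.isBounded_closedBall (x := 0) (r := 1)).subset ?_)
  · simp only [ONSys, Set.ofPred_forall]
    exact isClosed_iInter fun i => isClosed_iInter fun j => isClosed_eq (by fun_prop) (by fun_prop)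
  · intro u hu
    rw [Metric.mem_closedBall, dist_zero_right, pi_norm_le_iff_of_nonneg zero_le_one]
    intro i
    rw [pi_norm_le_iff_of_nonneg zero_le_one]
    intro b
    simpa [((onSys_iff_orthonormal u).1 hu).1 i] using PiLp.norm_apply_le (WithLp.toLp 2 (u i)) b

theorem continuous_rePairing (B : Matrix (Fin n) (Fin n) ℂ) :
    Continuous fun p : (Fin k → Fin n → ℂ) × (Fin k → Fin n → ℂ) => rePairing p.1 p.2 B := by
  simp only [rePairing, LinearMap.coe_mk, AddHom.coe_mk]
  fun_prop

theorem isClosed_isSingularSystem_line (hk : k ≤ n) (A X : Matrix (Fin n) (Fin n) ℂ) :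
    IsClosed {p : ℝ × (Fin k → Fin n → ℂ) × (Fin k → Fin n → ℂ) |
      IsSingularSystem hk (A + (p.1 : ℂ) • X) p.2.1 p.2.2} := by
  simp only [IsSingularSystem, Set.ofPred_and, Set.ofPred_forall]
  refine .inter (isCompact_setOf_onSys.isClosed.preimage (continuous_fst.comp continuous_snd))
    (.inter (isCompact_setOf_onSys.isClosed.preimage (continuous_snd.comp continuous_snd))
      (isClosed_iInter fun i => isClosed_eq (by fun_prop) ?_))
  exact (Complex.continuous_ofReal.comp
    ((continuous_svalues_line A X (Fin.castLE hk i)).comp continuous_fst)).smul (by fun_prop)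

theorem exists_isSingularSystem_le_rePairing (hk : k ≤ n) (A X : Matrix (Fin n) (Fin n) ℂ) {d : ℝ}
    (hd : Tendsto (fun t : ℝ => (kyFan k (A + (t : ℂ) • X) - kyFan k A) / t) (𝓝[>] 0) (𝓝 d)) :
    ∃ u v, IsSingularSystem hk A u v ∧ d ≤ rePairing u v X := by
  set t : ℕ → ℝ := fun m => 1 / (m + 1)
  have ht : Tendsto t atTop (𝓝[>] 0) := tendsto_nhdsWithin_iff.2
    ⟨tendsto_one_div_add_atTop_nhds_zero_nat,
      .of_forall fun _ => Set.mem_Ioi.2 Nat.one_div_pos_of_nat⟩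
  choose u v h using fun m => exists_isSingularSystem hk (A + (t m : ℂ) • X)
  obtain ⟨p, -, φ, hφ, hlim⟩ := (isCompact_setOf_onSys.prod isCompact_setOf_onSys).tendsto_subseq
    (x := fun m => (u m, v m)) fun m => ⟨(h m).1, (h m).2.1⟩
  have htφ : Tendsto (t ∘ φ) atTop (𝓝[>] 0) := ht.comp hφ.tendsto_atTop
  have hp : IsSingularSystem hk A p.1 p.2 := by
    simpa using (isClosed_isSingularSystem_line hk A X).mem_of_tendsto
      ((tendsto_nhdsWithin_iff.1 htφ).1.prodMk_nhds hlim) (.of_forall fun m => h (φ m))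
  exact ⟨p.1, p.2, hp, le_of_tendsto_of_tendsto' (hd.comp htφ)
    ((continuous_rePairing X).continuousAt.tendsto.comp hlim)
    fun m => (h (φ m)).slope_le_rePairing Nat.one_div_pos_of_nat⟩

end KyFan

theorem stmt6 {n k : ℕ} (hk : k ≤ n) (A X : Matrix (Fin n) (Fin n) ℂ) :
    ∃ d : ℝ,
      IsGreatest {x : ℝ | ∃ u v : Fin k → Fin n → ℂ, ONSys u ∧ ONSys v ∧
          (∀ i : Fin k, A *ᵥ v i = (svalues A (Fin.castLE hk i) : ℂ) • u i) ∧
          x = ∑ i, (star (u i) ⬝ᵥ (X *ᵥ v i)).re} d ∧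
      Filter.Tendsto (fun t : ℝ => (kyFan k (A + (t : ℂ) • X) - kyFan k A) / t)
        (nhdsWithin 0 (Set.Ioi 0)) (nhds d) := by
  set slope := fun t : ℝ => (kyFan k (A + (t : ℂ) • X) - kyFan k A) / t
  have hle : ∀ u v, IsSingularSystem hk A u v → rePairing u v X ≤ sInf (slope '' Set.Ioi 0) :=
    fun u v h => le_csInf (Set.nonempty_Ioi.image _) fun _ ⟨t, ht, hst⟩ =>
      hst ▸ h.rePairing_le_slope X ht
  obtain ⟨u₀, v₀, h₀⟩ := exists_isSingularSystem hk A
  have hlim : Tendsto slope (𝓝[>] 0) (𝓝 (sInf (slope '' Set.Ioi 0))) :=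
    (monotoneOn_kyFan_slope hk A X).tendsto_nhdsGT
      ⟨rePairing u₀ v₀ X, fun _ ⟨t, ht, hst⟩ => hst ▸ h₀.rePairing_le_slope X ht⟩
  obtain ⟨u, v, h, hge⟩ := exists_isSingularSystem_le_rePairing hk A X hlim
  refine ⟨_, ⟨⟨u, v, h.1, h.2.1, h.2.2, hge.antisymm (hle u v h)⟩, ?_⟩, hlim⟩
  rintro _ ⟨u, v, hu, hv, hA, rfl⟩
  exact hle u v ⟨hu, hv, hA⟩
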